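/- For all real numbers x, y with 0 ≤ x ≤ 1 and -x ≤ y ≤ x, the function f(x,y) := sqrt(4(1-x)(3·sqrt(x+y) + 2·sqrt(x-y))² + (2x + 5y + 2)²) satisfies f(x,y) ≤ αx + βy + γ, where α = 5/2 - 43/(2·sqrt 41), β = 9/2 - 13/(2·sqrt 41), γ = 2 + 28/sqrt 41. Equality holds if and only if (x,y) = (1,1) or (x,y) = ((2003 + 27·sqrt 41)/3524, (-1039 + 81·sqrt 41)/3524). -/

import Mathlib

/-!
In the coordinates `s = √(x+y)`, `t = √(x-y)` the domain becomes `s, t ≥ 0`, `s² + t² ≤ 2`,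
the square of `f` becomes a quartic polynomial in `s, t`, and the affine bound becomes a
quadratic one, which is nonnegative on the domain. The difference "bound² - f²" is a sum of
three terms: a nonnegative multiple of `2 - s² - t²` times a square, and two nonnegative
multiples of squares. Equality forces the two squares to vanish, which leaves exactly the
points `(s, t) = (√2, 0)` and one point on the ray `s = (3 + √41)/12 · t`; on both of them
the first term vanishes as well.
-/

/-- `f(x,y) = sqrt(4(1-x)(3√(x+y)+2√(x-y))² + (2x+5y+2)²)`. -/
noncomputable def f (x y : ℝ) : ℝ :=
  Real.sqrt (4*(1-x)*(3*Real.sqrt (x+y) + 2*Real.sqrt (x-y))^2 + (2*x+5*y+2)^2)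

noncomputable def α : ℝ := 5/2 - 43/(2*Real.sqrt 41)
noncomputable def β : ℝ := 9/2 - 13/(2*Real.sqrt 41)
noncomputable def γ : ℝ := 2 + 28/Real.sqrt 41

open Real

lemma six_lt_sqrt_41 : 6 < √41 :=
  lt_sqrt_of_sq_lt (by norm_num)

lemma sqrt_41_lt_seven : √41 < 7 :=
  (sqrt_lt' (by norm_num)).2 (by norm_num)

lemma sq_sqrt_41 : √41 ^ 2 = 41 :=
  sq_sqrt (by norm_num)

/-- `f x y ^ 2` in the coordinates `s = √(x+y)`, `t = √(x-y)`. -/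
noncomputable def radicand (s t : ℝ) : ℝ :=
  2*(2-s^2-t^2)*(3*s+2*t)^2 + ((7*s^2-3*t^2+4)/2)^2

/-- `α * x + β * y + γ` in the coordinates `s = √(x+y)`, `t = √(x-y)`. -/
noncomputable def majorant (s t : ℝ) : ℝ :=
  (7/2 - 14/41*√41)*s^2 + (-1 - 15/82*√41)*t^2 + (2 + 28/41*√41)

noncomputable def contactQuadric (s t : ℝ) : ℝ :=
  s^2 + (123/56 - 9/56*√41)*s*t + (2 - 1/7*√41)*t^2 - 2

lemma f_eq_sqrt_radicand {x y : ℝ} (hy1 : -x ≤ y) (hy2 : y ≤ x) :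
    f x y = √(radicand √(x+y) √(x-y)) := by
  rw [f, radicand, sq_sqrt (by linarith : 0 ≤ x + y), sq_sqrt (by linarith : 0 ≤ x - y)]
  congr 1
  ring

lemma α_eq : α = 5/2 - 43/82*√41 := by
  rw [α]
  field_simp
  linear_combination 86 * sq_sqrt_41

lemma β_eq : β = 9/2 - 13/82*√41 := by
  rw [β]
  field_simp
  linear_combination 26 * sq_sqrt_41

lemma γ_eq : γ = 2 + 28/41*√41 := by
  rw [γ]
  field_simp
  linear_combination (-28) * sq_sqrt_41

lemma affine_eq_majorant {x y : ℝ} (hy1 : -x ≤ y) (hy2 : y ≤ x) :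
    α * x + β * y + γ = majorant √(x+y) √(x-y) := by
  rw [α_eq, β_eq, γ_eq, majorant, sq_sqrt (by linarith : 0 ≤ x + y),
    sq_sqrt (by linarith : 0 ≤ x - y)]
  ring

lemma majorant_sq_sub_radicand (s t : ℝ) :
    majorant s t ^ 2 - radicand s t
      = (20117*√41 - 111889)/18329818176 * (2-s^2-t^2) * ((1521 - 27*√41)*s - (288+120*√41)*t)^2
        + (196/41 + 28/41*√41) * contactQuadric s t ^ 2
        + (-27/7 + 225/287*√41) * (t * (s - (3 + √41)/12 * t))^2 := by
  rw [majorant, radicand, contactQuadric]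
  linear_combination ((784/1681) + (-803728066/1304726641)*t^2 + (-1005850/31822601)*t^2*√41
    + (45040594297/146129383792)*t^4 + (-12750729/3564131312)*t^4*√41
    + (12958584/31822601)*s*t + (-905265/63645202)*s*t*√41 + (158437593/445516414)*s*t^3
    + (-21604941/891032828)*s*t^3*√41 + (-11573646377/41751252512)*s^2
    + (-1629477/1018323232)*s^2*√41 + (334391616635/584517535168)*s^2*t^2
    + (-14759425/14256525248)*s^2*t^2*√41 + (-6479292/31822601)*s^3*t
    + (905265/127290404)*s^3*t*√41 + (1837482793/83502505024)*s^4
    + (1629477/2036646464)*s^4*√41) * sq_sqrt_41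

lemma radicand_nonneg {s t : ℝ} (h : s^2 + t^2 ≤ 2) : 0 ≤ radicand s t := by
  unfold radicand
  have : 0 ≤ 2 - s^2 - t^2 := by linarith
  positivity

lemma majorant_nonneg (s : ℝ) {t : ℝ} (ht : t^2 ≤ 2) : 0 ≤ majorant s t := by
  have h41 := sqrt_41_lt_seven
  have hs_term : 0 ≤ (7/2 - 14/41*√41) * s^2 := mul_nonneg (by linarith) (sq_nonneg s)
  have ht_term : 0 ≤ (1 + 15/82*√41) * (2 - t^2) := mul_nonneg (by positivity) (by linarith)
  have h41_nonneg : 0 ≤ √41 := sqrt_nonneg 41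
  unfold majorant
  linarith

lemma majorant_sq_sub_radicand_summands_nonneg {s t : ℝ} (h : s^2 + t^2 ≤ 2) :
    0 ≤ (20117*√41 - 111889)/18329818176 * (2-s^2-t^2)
      * ((1521 - 27*√41)*s - (288+120*√41)*t)^2 ∧
    0 ≤ (196/41 + 28/41*√41) * contactQuadric s t ^ 2 ∧
    0 ≤ (-27/7 + 225/287*√41) * (t * (s - (3 + √41)/12 * t))^2 := by
  have h41 := six_lt_sqrt_41
  refine ⟨mul_nonneg (mul_nonneg ?_ ?_) (sq_nonneg _), mul_nonneg ?_ (sq_nonneg _),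
    mul_nonneg ?_ (sq_nonneg _)⟩ <;> linarith

lemma radicand_le_majorant_sq {s t : ℝ} (h : s^2 + t^2 ≤ 2) :
    radicand s t ≤ majorant s t ^ 2 := by
  obtain ⟨hA, hB, hC⟩ := majorant_sq_sub_radicand_summands_nonneg h
  linarith [majorant_sq_sub_radicand s t]

lemma radicand_eq_majorant_sq_iff {s t : ℝ} (h : s^2 + t^2 ≤ 2) :
    radicand s t = majorant s t ^ 2 ↔
      contactQuadric s t = 0 ∧ t * (s - (3 + √41)/12 * t) = 0 := by
  have hdiff := majorant_sq_sub_radicand s t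
  obtain ⟨hA, hB, hC⟩ := majorant_sq_sub_radicand_summands_nonneg h
  have h41 := six_lt_sqrt_41
  constructor
  · intro heq
    rw [heq, sub_self] at hdiff
    obtain ⟨hAB, hC0⟩ := (add_eq_zero_iff_of_nonneg (add_nonneg hA hB) hC).1 hdiff.symm
    obtain ⟨-, hB0⟩ := (add_eq_zero_iff_of_nonneg hA hB).1 hAB
    exact ⟨pow_eq_zero_iff two_ne_zero |>.1 <| (mul_eq_zero.1 hB0).resolve_left (by linarith),
      pow_eq_zero_iff two_ne_zero |>.1 <| (mul_eq_zero.1 hC0).resolve_left (by linarith)⟩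
  · rintro ⟨hq, hl⟩
    have hA0 : (2-s^2-t^2) * ((1521 - 27*√41)*s - (288+120*√41)*t) = 0 := by
      rcases mul_eq_zero.1 hl with ht | hs
      · subst ht
        rw [contactQuadric] at hq
        exact mul_eq_zero_of_left (by linear_combination -hq) _
      · refine mul_eq_zero_of_right _ ?_
        linear_combination (1521 - 27*√41) * hs - 9/4 * t * sq_sqrt_41
    rw [hq, hl] at hdiff
    linear_combination -hdiff - (20117*√41 - 111889)/18329818176
      * ((1521 - 27*√41)*s - (288+120*√41)*t) * hA0

lemma sqrt_radicand_le_majorant {s t : ℝ} (h : s^2 + t^2 ≤ 2) :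
    √(radicand s t) ≤ majorant s t :=
  (sqrt_le_left (majorant_nonneg s (by linarith [sq_nonneg s]))).2 (radicand_le_majorant_sq h)

lemma sqrt_radicand_eq_majorant_iff {s t : ℝ} (h : s^2 + t^2 ≤ 2) :
    √(radicand s t) = majorant s t ↔
      contactQuadric s t = 0 ∧ t * (s - (3 + √41)/12 * t) = 0 := by
  rw [sqrt_eq_iff_eq_sq (radicand_nonneg h) (majorant_nonneg s (by linarith [sq_nonneg s])),
    radicand_eq_majorant_sq_iff h]

lemma equality_conditions_iff {x y s t : ℝ} (hs0 : 0 ≤ s) (ht0 : 0 ≤ t)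
    (hs : s^2 = x + y) (ht : t^2 = x - y) :
    (contactQuadric s t = 0 ∧ t * (s - (3 + √41)/12 * t) = 0) ↔
    (x = 1 ∧ y = 1) ∨
      (x = (2003 + 27*√41)/3524 ∧ y = (-1039 + 81*√41)/3524) := by
  have hr := sq_sqrt_41
  rw [contactQuadric]
  constructor
  · rintro ⟨hq, hl⟩
    rcases mul_eq_zero.1 hl with rfl | hp
    · left
      constructor
      · linear_combination (hq - hs - ht) / 2
      · linear_combination (hq - hs + ht) / 2
    · right
      -- on the ray `s = (3 + √41)/12 · t` the quadric fixes `t²`, hence `x - y` and `x + y`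
      have hxmy : x - y = (1521 - 27*√41)/1762 := by
        linear_combination -ht + (1521/3524 - 27/3524*√41) * hq
          + (-106587/98672*t + 735/14096*t*√41 - 1521/3524*s + 27/3524*s*√41) * hp
          + (1283/394688*t^2 - 117/197344*s*t) * hr
      have hxpy : x + y = (241 + 27*√41)/881 := by
        linear_combination -hs + (241/1762 + 27/1762*√41) * hq
          + (-222/6167*t + 348/6167*t*√41 + 1521/1762*s - 27/1762*s*√41) * hp
          + (85/12334*t^2 + 117/98672*s*t) * hr
      constructor
      · linear_combination (hxpy + hxmy) / 2
      · linear_combination (hxpy - hxmy) / 2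
  · rintro (⟨rfl, rfl⟩ | ⟨hx, hy⟩)
    · obtain rfl : t = 0 := pow_eq_zero_iff two_ne_zero |>.1 (by linear_combination ht)
      constructor
      · linear_combination hs
      · ring
    · have hst : s * t = (144 + 60*√41)/881 := by
        refine (pow_left_inj₀ (by positivity) (by positivity) two_ne_zero).1 ?_
        linear_combination t^2 * hs + (x + y) * ht
          + (2003/3524 + 27/3524*√41 + x) * hx + (1039/3524 - 81/3524*√41 - y) * hy
          - 9/1762 * hr
      constructor
      · linear_combination (3 - 1/7*√41) * hx + (-1 + 1/7*√41) * hy + hs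
          + (2 - 1/7*√41) * ht + (123/56 - 9/56*√41) * hst - 54/6167 * hr
      · linear_combination (-1/4 - 1/12*√41) * hx + (1/4 + 1/12*√41) * hy
          + (-1/4 - 1/12*√41) * ht + hst + 9/7048 * hr

theorem stmt1_general (x y : ℝ) (hx1 : x ≤ 1) (hy1 : -x ≤ y) (hy2 : y ≤ x) :
    f x y ≤ α * x + β * y + γ ∧
    (f x y = α * x + β * y + γ ↔
      (x = 1 ∧ y = 1) ∨
      (x = (2003 + 27*Real.sqrt 41)/3524 ∧ y = (-1039 + 81*Real.sqrt 41)/3524)) := by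
  have hs : √(x+y) ^ 2 = x + y := sq_sqrt (by linarith)
  have ht : √(x-y) ^ 2 = x - y := sq_sqrt (by linarith)
  have hdom : √(x+y) ^ 2 + √(x-y) ^ 2 ≤ 2 := by linarith
  rw [f_eq_sqrt_radicand hy1 hy2, affine_eq_majorant hy1 hy2, sqrt_radicand_eq_majorant_iff hdom,
    equality_conditions_iff (sqrt_nonneg _) (sqrt_nonneg _) hs ht]
  exact ⟨sqrt_radicand_le_majorant hdom, Iff.rfl⟩

theorem stmt1 (x y : ℝ) (hx0 : 0 ≤ x) (hx1 : x ≤ 1) (hy1 : -x ≤ y) (hy2 : y ≤ x) :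
    f x y ≤ α * x + β * y + γ ∧
    (f x y = α * x + β * y + γ ↔
      (x = 1 ∧ y = 1) ∨
      (x = (2003 + 27*Real.sqrt 41)/3524 ∧ y = (-1039 + 81*Real.sqrt 41)/3524)) :=
  stmt1_general x y hx1 hy1 hy2
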